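/- Let G₁ be a finite connected graph that is not complete and let G₂ be a finite graph with at least one vertex. If k₁(G₁) = ∞ and G₂ has no isolated vertices (|V₀(G₂)| = 0), then k₁(G₁∘G₂) = κ(G₁∘G₂). -/

import Mathlib

/-- The lexicographic product of two simple graphs: `(x₁,y₁)` is adjacent to `(x₂,y₂)`
iff `x₁x₂` is an edge of `G`, or `x₁ = x₂` and `y₁y₂` is an edge of `H`. -/
def lexProd {V W : Type*} (G : SimpleGraph V) (H : SimpleGraph W) :
    SimpleGraph (V × W) where
  Adj p q := G.Adj p.1 q.1 ∨ (p.1 = q.1 ∧ H.Adj p.2 q.2)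
  symm := by
    constructor
    rintro ⟨x₁, y₁⟩ ⟨x₂, y₂⟩ (h | ⟨rfl, h⟩)
    · exact Or.inl h.symm
    · exact Or.inr ⟨rfl, h.symm⟩
  loopless := by
    constructor
    rintro ⟨x, y⟩ (h | ⟨-, h⟩)
    · exact G.irrefl h
    · exact H.irrefl h

/-- The set `V₀(G)` of isolated vertices of `G`. -/
def isoSet {V : Type*} (G : SimpleGraph V) : Set V := {v | ∀ w, ¬ G.Adj v w}

/-- The set of vertices of `G − S` that are isolated in `G − S`,
i.e. `V₀(G − S)` regarded as a subset of the vertices of `G`. -/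
def isolatedAfter {V : Type*} (G : SimpleGraph V) (S : Set V) : Set V :=
  {v | v ∉ S ∧ ∀ w ∉ S, ¬ G.Adj v w}

/-- `S` is a vertex-cut of `G`: deleting `S` leaves a disconnected graph, or reduces `G`
to the trivial one-vertex graph `K₁`. -/
def IsVertexCut {V : Type*} (G : SimpleGraph V) (S : Set V) : Prop :=
  (Sᶜ.Nonempty ∧ ¬ (G.induce Sᶜ).Connected) ∨ (∃ v, Sᶜ = {v})

/-- The connectivity `κ(G)`: the minimum cardinality of a vertex-cut of `G`. -/
noncomputable def graphConnectivity {V : Type*} (G : SimpleGraph V) : ℕ :=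
  sInf {n | ∃ S : Set V, IsVertexCut G S ∧ S.ncard = n}

/-- A minimum vertex-cut: a vertex-cut of cardinality `κ(G)`. -/
def IsMinVertexCut {V : Type*} (G : SimpleGraph V) (S : Set V) : Prop :=
  IsVertexCut G S ∧ S.ncard = graphConnectivity G

/-- A k₁-vertex-cut: a vertex-cut `S` such that `G − S` has no isolated vertices. -/
def IsK1VertexCut {V : Type*} (G : SimpleGraph V) (S : Set V) : Prop :=
  IsVertexCut G S ∧ ∀ v ∉ S, ∃ w ∉ S, G.Adj v w

/-- The k₁-connectivity `k₁(G)`, valued in `ℕ∞`; it is `⊤` (infinity) if `G`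
has no k₁-vertex-cut. -/
noncomputable def k1Connectivity {V : Type*} (G : SimpleGraph V) : ℕ∞ :=
  sInf {n : ℕ∞ | ∃ S : Set V, IsK1VertexCut G S ∧ (S.ncard : ℕ∞) = n}

/-- `G` is super connected if every minimum vertex-cut isolates a vertex,
i.e. some vertex of `G − S` has no neighbours in `G − S`. -/
def SuperConnected {V : Type*} (G : SimpleGraph V) : Prop :=
  ∀ S : Set V, IsMinVertexCut G S → ∃ v ∉ S, ∀ w ∉ S, ¬ G.Adj v w

/-!
When `G₁` is not complete, a minimum vertex-cut `T` of `G₁` cannot leave a single vertex, so it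
disconnects `G₁`, and then `T × V(G₂)` disconnects `G₁∘G₂`; hence `κ(G₁∘G₂) ≤ κ(G₁)·|V(G₂)|`.
If a vertex `(x, y)` were isolated in `G₁∘G₂ − S` for a minimum vertex-cut `S`, then `S` would
contain its neighbourhood `N(x) × V(G₂) ∪ {x} × N(y)`, of size
`deg(x)·|V(G₂)| + deg(y) > κ(G₁)·|V(G₂)|` since `deg(x) ≥ κ(G₁)` and `deg(y) ≥ 1`.
So every minimum vertex-cut of `G₁∘G₂` is a k₁-vertex-cut.
-/

open Set SimpleGraph

section

variable {V W : Type*} {G : SimpleGraph V} {H : SimpleGraph W}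

lemma IsVertexCut.of_neighborSet_subset {S : Set V} {v : V} (hv : v ∉ S)
    (hN : G.neighborSet v ⊆ S) : IsVertexCut G S := by
  by_cases hS : Sᶜ = {v}
  · exact Or.inr ⟨v, hS⟩
  obtain ⟨u, hu, huv⟩ : ∃ u ∈ Sᶜ, u ≠ v := by
    by_contra! h
    exact hS (eq_singleton_iff_unique_mem.2 ⟨hv, h⟩)
  refine Or.inl ⟨⟨v, hv⟩, fun hconn => ?_⟩
  obtain ⟨p⟩ := hconn.preconnected ⟨v, hv⟩ ⟨u, hu⟩
  have hp : ¬ p.Nil := Walk.not_nil_of_ne fun h => huv (congrArg Subtype.val h).symm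
  exact p.snd.2 (hN (p.adj_snd hp))

lemma isVertexCut_compl_pair {a b : V} (hab : a ≠ b) (hnadj : ¬ G.Adj a b) :
    IsVertexCut G ({a, b} : Set V)ᶜ :=
  IsVertexCut.of_neighborSet_subset (not_not_intro (mem_insert a _)) fun w hw hwab => by
    rcases hwab with rfl | rfl
    exacts [G.loopless.irrefl _ hw, hnadj hw]

lemma graphConnectivity_le {S : Set V} (hS : IsVertexCut G S) : graphConnectivity G ≤ S.ncard :=
  Nat.sInf_le ⟨S, hS, rfl⟩

lemma exists_isMinVertexCut {S : Set V} (hS : IsVertexCut G S) : ∃ T, IsMinVertexCut G T :=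
  Nat.sInf_mem (⟨_, S, hS, rfl⟩ : {n | ∃ S : Set V, IsVertexCut G S ∧ S.ncard = n}.Nonempty)

lemma graphConnectivity_le_ncard_neighborSet (x : V) :
    graphConnectivity G ≤ (G.neighborSet x).ncard :=
  graphConnectivity_le (.of_neighborSet_subset G.notMem_neighborSet_self subset_rfl)

lemma graphConnectivity_le_card_sub_two [Finite V] {a b : V} (hab : a ≠ b)
    (hnadj : ¬ G.Adj a b) : graphConnectivity G ≤ Nat.card V - 2 := by
  have hsum := ncard_add_ncard_compl ({a, b} : Set V)
  rw [ncard_pair hab] at hsum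
  have := graphConnectivity_le (isVertexCut_compl_pair hab hnadj)
  omega

lemma IsMinVertexCut.disconnects [Finite V] (hG : G ≠ ⊤) {T : Set V}
    (hT : IsMinVertexCut G T) : Tᶜ.Nonempty ∧ ¬ (G.induce Tᶜ).Connected := by
  obtain ⟨a, b, hab, hnadj⟩ := ne_top_iff_exists_not_adj.1 hG
  refine hT.1.resolve_right ?_
  rintro ⟨v, hv⟩
  have hsum := ncard_add_ncard_compl T
  have hle := graphConnectivity_le_card_sub_two hab hnadj
  rw [hv, ncard_singleton, hT.2] at hsum
  have : 2 ≤ Nat.card V := by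
    simpa [ncard_pair hab] using ncard_le_card ({a, b} : Set V)
  omega

lemma lexProd_neighborSet (x : V) (y : W) :
    (lexProd G H).neighborSet (x, y) =
      G.neighborSet x ×ˢ univ ∪ {x} ×ˢ H.neighborSet y := by
  ext ⟨x', y'⟩
  simp [lexProd, eq_comm]

lemma ncard_lexProd_neighborSet [Finite V] [Finite W] (x : V) (y : W) :
    ((lexProd G H).neighborSet (x, y)).ncard =
      (G.neighborSet x).ncard * Nat.card W + (H.neighborSet y).ncard := by
  have hdisj : Disjoint (G.neighborSet x ×ˢ (univ : Set W)) ({x} ×ˢ H.neighborSet y) :=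
    disjoint_left.2 fun p hp hp' =>
      G.notMem_neighborSet_self (mem_singleton_iff.1 hp'.1 ▸ hp.1)
  rw [lexProd_neighborSet, ncard_union_eq hdisj, ncard_prod, ncard_prod,
    ncard_univ, ncard_singleton, one_mul]

/-- Walks in `G₁∘G₂ − T × V(G₂)` project to walks in `G₁ − T`: each step either follows an edge
of `G₁` or stays in a fibre. -/
lemma lexProd_isVertexCut_prod_univ [Nonempty W] {T : Set V}
    (hT : Tᶜ.Nonempty ∧ ¬ (G.induce Tᶜ).Connected) :
    IsVertexCut (lexProd G H) (T ×ˢ univ) := by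
  obtain ⟨⟨v, hv⟩, hdisc⟩ := hT
  refine Or.inl ⟨⟨(v, Classical.arbitrary W), fun h => hv h.1⟩,
    fun hconn => hdisc ?_⟩
  have : Nonempty ↥Tᶜ := ⟨⟨v, hv⟩⟩
  refine ⟨fun p q => ?_⟩
  let lift (p : ↥Tᶜ) : ↥(T ×ˢ (univ : Set W))ᶜ :=
    ⟨(p.1, Classical.arbitrary W), fun h => p.2 h.1⟩
  let proj (P : ↥(T ×ˢ (univ : Set W))ᶜ) : ↥Tᶜ := ⟨P.1.1, fun h => P.2 ⟨h, trivial⟩⟩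
  have hreach := (reachable_iff_reflTransGen _ _).1 (hconn.preconnected (lift p) (lift q))
  rw [reachable_iff_reflTransGen]
  refine hreach.lift' proj ?_
  rintro P Q (hadj | ⟨heq, -⟩)
  · exact .single hadj
  · show Relation.ReflTransGen _ (proj P) (proj Q)
    rw [show proj P = proj Q from Subtype.ext heq]

lemma exists_isVertexCut_lexProd [Finite V] [Nonempty W] (hG : G ≠ ⊤) :
    ∃ S, IsVertexCut (lexProd G H) S ∧ S.ncard = graphConnectivity G * Nat.card W := by
  obtain ⟨a, b, hab, hnadj⟩ := ne_top_iff_exists_not_adj.1 hG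
  obtain ⟨T, hT⟩ := exists_isMinVertexCut (isVertexCut_compl_pair hab hnadj)
  exact ⟨T ×ˢ univ, lexProd_isVertexCut_prod_univ (hT.disconnects hG),
    by rw [ncard_prod, ncard_univ, hT.2]⟩

lemma graphConnectivity_lexProd_le [Finite V] [Nonempty W] (hG : G ≠ ⊤) :
    graphConnectivity (lexProd G H) ≤ graphConnectivity G * Nat.card W := by
  obtain ⟨S, hS, hcard⟩ := exists_isVertexCut_lexProd (H := H) hG
  exact hcard ▸ graphConnectivity_le hS

lemma IsMinVertexCut.lexProd_isK1VertexCut [Finite V] [Finite W] (hG : G ≠ ⊤)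
    (hH : isoSet H = ∅) {S : Set (V × W)} (hS : IsMinVertexCut (lexProd G H) S) :
    IsK1VertexCut (lexProd G H) S := by
  refine ⟨hS.1, fun ⟨x, y⟩ hxy => ?_⟩
  by_contra! hisolated
  have : Nonempty W := ⟨y⟩
  have hdeg : 0 < (H.neighborSet y).ncard := by
    have hy : y ∉ isoSet H := hH ▸ notMem_empty y
    exact (ncard_pos).2 (not_forall_not.1 hy)
  have hN : (lexProd G H).neighborSet (x, y) ⊆ S := fun q hq =>
    not_not.1 fun hqS => hisolated q hqS hq
  have hlarge : graphConnectivity G * Nat.card W < graphConnectivity (lexProd G H) := calc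
    _ ≤ (G.neighborSet x).ncard * Nat.card W :=
      Nat.mul_le_mul_right _ (graphConnectivity_le_ncard_neighborSet x)
    _ < ((lexProd G H).neighborSet (x, y)).ncard := by rw [ncard_lexProd_neighborSet]; omega
    _ ≤ S.ncard := ncard_le_ncard hN
    _ = _ := hS.2
  exact (graphConnectivity_lexProd_le hG).not_gt hlarge

lemma graphConnectivity_le_k1Connectivity (G : SimpleGraph V) :
    (graphConnectivity G : ℕ∞) ≤ k1Connectivity G :=
  le_sInf <| by
    rintro _ ⟨S, hS, rfl⟩
    exact_mod_cast graphConnectivity_le hS.1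

lemma k1Connectivity_eq_of_isMinVertexCut {S : Set V} (hS : IsMinVertexCut G S)
    (hS₁ : IsK1VertexCut G S) : k1Connectivity G = graphConnectivity G :=
  le_antisymm (sInf_le ⟨S, hS₁, by rw [hS.2]⟩) (graphConnectivity_le_k1Connectivity G)

end

theorem k1_lexProd_eq_kappa_of_k1_top_general {V W : Type*} [Fintype V] [Fintype W] [Nonempty W]
    (G₁ : SimpleGraph V) (G₂ : SimpleGraph W)
    (hnc : G₁ ≠ ⊤)
    (hiso : isoSet G₂ = ∅) :
    k1Connectivity (lexProd G₁ G₂) = (graphConnectivity (lexProd G₁ G₂) : ℕ∞) := by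
  obtain ⟨S₀, hS₀, -⟩ := exists_isVertexCut_lexProd (H := G₂) hnc
  obtain ⟨S, hS⟩ := exists_isMinVertexCut hS₀
  exact k1Connectivity_eq_of_isMinVertexCut hS (hS.lexProd_isK1VertexCut hnc hiso)

/-- If k₁(G₁) = ∞ and G₂ has no isolated vertices, then k₁(G₁∘G₂) = κ(G₁∘G₂). -/
theorem k1_lexProd_eq_kappa_of_k1_top {V W : Type*} [Fintype V] [Fintype W] [Nonempty W]
    (G₁ : SimpleGraph V) (G₂ : SimpleGraph W)
    (hconn : G₁.Connected) (hnc : G₁ ≠ ⊤)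
    (hinf : k1Connectivity G₁ = ⊤) (hiso : isoSet G₂ = ∅) :
    k1Connectivity (lexProd G₁ G₂) = (graphConnectivity (lexProd G₁ G₂) : ℕ∞) :=
  k1_lexProd_eq_kappa_of_k1_top_general G₁ G₂ hnc hiso
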